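/- For every integer k ≥ 2 there exists an undirected graph G with distinguished nodes s, t ∈ V(G) such that: (a) there exists x : E(G) → ℝ with x ≥ 0 satisfying Σ_{e ∈ P} x(e) ≥ 1 for every odd-length s–t path P in G and with total value Σ_{e ∈ E(G)} x(e) ≤ k/2; and (b) every set F ⊆ E(G) that intersects every odd-length s–t path in G satisfies |F| ≥ k − 1. Consequently, the integrality gap of the odd path blocker LP for undirected graphs is at least 2 − 2/k. -/

import Mathlib

/-!
Terminals `s, t` are both joined to `a₁, …, a_k`, each `aᵢ` is matched to `bᵢ`, and the `bᵢ`
lie in a clique (the hub) containing `k` further disjoint edges `xₗyₗ`. Off the hub the graph is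
bipartite with `s, t` on the same side, so an odd `s – t` path enters and leaves the hub and thus
uses two matching edges `aᵢbᵢ`: weight `1/2` on the matching is a fractional blocker of value
`k/2`. Conversely, a set of at most `k - 2` edges misses two of the disjoint triples
`{saᵢ, aᵢbᵢ, aᵢt}` and then one of the `k` disjoint routes `bᵢxₗyₗbⱼ`, which together form the
odd path `s aᵢ bᵢ xₗ yₗ bⱼ aⱼ t`.
-/

open Function

namespace SimpleGraph.Walk

variable {V : Type*} {G : SimpleGraph V} {u v : V}

theorem even_length_iff_of_forall_dart (c : V → Bool) (p : G.Walk u v)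
    (hc : ∀ d ∈ p.darts, c d.fst ≠ c d.snd) : Even p.length ↔ c u = c v := by
  induction p with
  | nil => simp
  | cons h p ih =>
    simp only [darts_cons, List.mem_cons, forall_eq_or_imp] at hc
    rw [length_cons, Nat.even_add_one, ih hc.2, Bool.eq_not_of_ne hc.1]
    cases c _ <;> cases c _ <;> simp

theorem two_mul_le_sum_edges_of_mem_support {S : Set V} {x : Sym2 V → ℝ} {c : ℝ}
    (hx₀ : ∀ e, 0 ≤ x e) (hx : ∀ ⦃a b⦄, G.Adj a b → a ∈ S → b ∉ S → c ≤ x s(a, b))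
    {p : G.Walk u v} (hu : u ∉ S) (hv : v ∉ S) {w : V} (hw : w ∈ p.support) (hwS : w ∈ S) :
    2 * c ≤ (p.edges.map x).sum := by
  obtain ⟨q, r, rfl⟩ := mem_support_iff_exists_append.mp hw
  obtain ⟨d, hdq, hd⟩ := q.exists_boundary_dart Sᶜ hu (by simpa using hwS)
  obtain ⟨d', hdr, hd'⟩ := r.exists_boundary_dart S hwS hv
  have le_sum : ∀ {a b} (t : G.Walk a b) (d : G.Dart), d ∈ t.darts →
      x d.edge ≤ (t.edges.map x).sum := fun t d hd =>
    List.single_le_sum (by simp [hx₀]) _ (List.mem_map_of_mem (List.mem_map_of_mem hd))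
  have hq : c ≤ x d.edge := by
    rw [Dart.edge, Sym2.eq_swap]; exact hx d.adj.symm (by simpa using hd.2) hd.1
  have hr : c ≤ x d'.edge := hx d'.adj hd'.1 hd'.2
  rw [edges_append, List.map_append, List.sum_append]
  linarith [le_sum q d hdq, le_sum r d' hdr]

theorem one_le_sum_edges_of_odd_length {S : Set V} {c : V → Bool}
    (hc : ∀ ⦃a b⦄, G.Adj a b → a ∉ S → b ∉ S → c a ≠ c b) {x : Sym2 V → ℝ}
    (hx₀ : ∀ e, 0 ≤ x e) (hx : ∀ ⦃a b⦄, G.Adj a b → a ∈ S → b ∉ S → 1 / 2 ≤ x s(a, b))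
    {p : G.Walk u v} (hu : u ∉ S) (hv : v ∉ S) (huv : c u = c v) (hp : Odd p.length) :
    1 ≤ (p.edges.map x).sum := by
  by_cases hS : ∃ w ∈ p.support, w ∈ S
  · obtain ⟨w, hw, hwS⟩ := hS
    linarith [two_mul_le_sum_edges_of_mem_support hx₀ hx hu hv hw hwS]
  · push Not at hS
    have hEven := (p.even_length_iff_of_forall_dart c fun d hd =>
      hc d.adj (hS _ (p.dart_fst_mem_support_of_mem_darts hd))
        (hS _ (p.dart_snd_mem_support_of_mem_darts hd))).mpr huv
    exact absurd hp (Nat.not_odd_iff_even.mpr hEven)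

end SimpleGraph.Walk

theorem Set.ncard_setOf_not_disjoint_le {ι α : Type*} {T : ι → Set α}
    (hT : Pairwise (Disjoint on T)) {F : Set α} (hF : F.Finite) :
    {i | ¬Disjoint F (T i)}.ncard ≤ F.ncard := by
  rcases isEmpty_or_nonempty α with hα | hα
  · simp [Set.eq_empty_of_isEmpty F]
  have hmeet (i : ι) (hi : ¬Disjoint F (T i)) : ∃ a, a ∈ F ∧ a ∈ T i :=
    Set.not_disjoint_iff.mp hi
  choose! f hfF hfT using hmeet
  refine Set.ncard_le_ncard_of_injOn f hfF (fun i hi j hj hij => ?_) hF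
  by_contra hne
  exact Set.disjoint_left.mp (hT hne) (hfT i hi) (hij ▸ hfT j hj)

theorem Set.card_le_ncard_add_ncard_setOf_disjoint {ι α : Type*} [Finite ι] {T : ι → Set α}
    (hT : Pairwise (Disjoint on T)) {F : Set α} (hF : F.Finite) :
    Nat.card ι ≤ F.ncard + {i | Disjoint F (T i)}.ncard := by
  rw [← Set.ncard_add_ncard_compl {i | Disjoint F (T i)}]
  have := Set.ncard_setOf_not_disjoint_le hT hF
  simp only [Set.compl_ofPred]
  omega

theorem finsum_mem_indicator_range_const_le {ι α : Type*} [Finite ι] (E : Set α) (f : ι → α)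
    {c : ℝ} (hc : 0 ≤ c) :
    ∑ᶠ e ∈ E, (Set.range f).indicator (fun _ => c) e ≤ Nat.card ι * c := by
  have hfin : (E ∩ Set.range f).Finite := (Set.finite_range f).inter_of_right E
  rw [finsum_mem_def, Set.indicator_indicator, ← finsum_mem_def,
    finsum_mem_eq_finite_toFinset_sum _ hfin, Finset.sum_const, nsmul_eq_mul,
    ← Set.ncard_eq_toFinset_card _ hfin]
  gcongr
  calc (E ∩ Set.range f).ncard ≤ (Set.range f).ncard := Set.ncard_inter_le_ncard_right _ _
    _ ≤ Nat.card ι := by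
      rw [← Set.image_univ, ← Set.ncard_univ]; exact Set.ncard_image_le Set.finite_univ

namespace OddPathBlocker

/-- Vertex `0` is `s`, `1` is `t`, `i + 2` is `aᵢ` and `i + k + 2` is `bᵢ`; the vertices from
`k + 2` on form the hub clique, with `xₗ = 2l + 2k + 2` and `yₗ = 2l + 2k + 3`. -/
def gapGraph (k : ℕ) : SimpleGraph (Fin (4 * k + 2)) := SimpleGraph.fromRel fun u v =>
  u.val < 2 ∧ 2 ≤ v.val ∧ v.val < k + 2 ∨
  2 ≤ u.val ∧ u.val < k + 2 ∧ v.val = u.val + k ∨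
  k + 2 ≤ u.val ∧ k + 2 ≤ v.val

def vs (k : ℕ) : Fin (4 * k + 2) := ⟨0, by omega⟩
def vt (k : ℕ) : Fin (4 * k + 2) := ⟨1, by omega⟩

variable {k : ℕ}

def va (i : Fin k) : Fin (4 * k + 2) := ⟨i + 2, by omega⟩
def vb (i : Fin k) : Fin (4 * k + 2) := ⟨i + k + 2, by omega⟩
def vx (l : Fin k) : Fin (4 * k + 2) := ⟨2 * l + 2 * k + 2, by omega⟩
def vy (l : Fin k) : Fin (4 * k + 2) := ⟨2 * l + 2 * k + 3, by omega⟩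

def hub (k : ℕ) : Set (Fin (4 * k + 2)) := {v | k + 2 ≤ v.val}

def matchingEdge (i : Fin k) : Sym2 (Fin (4 * k + 2)) := s(va i, vb i)

theorem mem_range_matchingEdge_of_adj ⦃a b : Fin (4 * k + 2)⦄ (h : (gapGraph k).Adj a b)
    (ha : a ∈ hub k) (hb : b ∉ hub k) : s(a, b) ∈ Set.range matchingEdge := by
  simp only [gapGraph, SimpleGraph.fromRel_adj, hub, Set.mem_ofPred_eq] at h ha hb
  refine ⟨⟨b.val - 2, by omega⟩, ?_⟩
  rw [matchingEdge, Sym2.eq_swap, Sym2.eq_iff]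
  left
  constructor <;> ext <;> simp only [va, vb] <;> omega

theorem decide_lt_two_ne_of_adj ⦃a b : Fin (4 * k + 2)⦄ (h : (gapGraph k).Adj a b)
    (ha : a ∉ hub k) (hb : b ∉ hub k) : decide (a.val < 2) ≠ decide (b.val < 2) := by
  simp only [gapGraph, SimpleGraph.fromRel_adj, hub, Set.mem_ofPred_eq] at h ha hb
  simp only [ne_eq, decide_eq_decide]
  omega

noncomputable def halfOnMatching (k : ℕ) : Sym2 (Fin (4 * k + 2)) → ℝ :=
  (Set.range (matchingEdge (k := k))).indicator fun _ => 1 / 2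

theorem halfOnMatching_nonneg (e : Sym2 (Fin (4 * k + 2))) : 0 ≤ halfOnMatching k e :=
  Set.indicator_nonneg (fun _ _ => by norm_num) e

def terminalTriple (i : Fin k) : Set (Sym2 (Fin (4 * k + 2))) :=
  {s(vs k, va i), s(va i, vb i), s(va i, vt k)}

def hubSegment (i j l : Fin k) : Set (Sym2 (Fin (4 * k + 2))) :=
  {s(vb i, vx l), s(vx l, vy l), s(vy l, vb j)}

theorem pairwise_disjoint_terminalTriple : Pairwise (Disjoint on terminalTriple (k := k)) := by
  intro i j hij
  have := Fin.val_ne_of_ne hij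
  simp [onFun, terminalTriple, vs, vt, va, vb, Fin.ext_iff]
  omega

theorem pairwise_disjoint_hubSegment (i j : Fin k) : Pairwise (Disjoint on hubSegment i j) := by
  intro l m hlm
  have := Fin.val_ne_of_ne hlm
  simp [onFun, hubSegment, vx, vy, vb, Fin.ext_iff]
  omega

theorem exists_odd_path {i j : Fin k} (hij : i ≠ j) (l : Fin k) :
    ∃ p : (gapGraph k).Walk (vs k) (vt k), p.IsPath ∧ Odd p.length ∧
      ∀ e ∈ p.edges, e ∈ terminalTriple i ∪ hubSegment i j l ∪ terminalTriple j := by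
  have := Fin.val_ne_of_ne hij
  have hsa : (gapGraph k).Adj (vs k) (va i) := by simp [gapGraph, vs, va, Fin.ext_iff]
  have hab : (gapGraph k).Adj (va i) (vb i) := by simp [gapGraph, va, vb, Fin.ext_iff]; omega
  have hbx : (gapGraph k).Adj (vb i) (vx l) := by simp [gapGraph, vx, vb, Fin.ext_iff]; omega
  have hxy : (gapGraph k).Adj (vx l) (vy l) := by simp [gapGraph, vx, vy, Fin.ext_iff]; omega
  have hyb : (gapGraph k).Adj (vy l) (vb j) := by simp [gapGraph, vy, vb, Fin.ext_iff]; omega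
  have hba : (gapGraph k).Adj (vb j) (va j) := by simp [gapGraph, va, vb, Fin.ext_iff]; omega
  have hat : (gapGraph k).Adj (va j) (vt k) := by simp [gapGraph, va, vt, Fin.ext_iff]
  let p : (gapGraph k).Walk (vs k) (vt k) :=
    .cons hsa <| .cons hab <| .cons hbx <| .cons hxy <| .cons hyb <| .cons hba <| .cons hat .nil
  refine ⟨p, ?_, ⟨3, rfl⟩, ?_⟩
  · simp only [p, SimpleGraph.Walk.isPath_def, SimpleGraph.Walk.support_cons,
      SimpleGraph.Walk.support_nil]
    simp [vs, vt, va, vb, vx, vy, Fin.ext_iff]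
    omega
  · simp [p, terminalTriple, hubSegment, Sym2.eq_swap]

theorem sub_one_le_ncard_of_forall_odd_path {F : Set (Sym2 (Fin (4 * k + 2)))}
    (hF : ∀ p : (gapGraph k).Walk (vs k) (vt k), p.IsPath → Odd p.length →
      ∃ e ∈ F, e ∈ p.edges) :
    k - 1 ≤ F.ncard := by
  by_contra! hsmall
  have hfin : F.Finite := Set.toFinite F
  have htriples :=
    Set.card_le_ncard_add_ncard_setOf_disjoint pairwise_disjoint_terminalTriple hfin
  rw [Nat.card_eq_fintype_card, Fintype.card_fin] at htriples
  obtain ⟨i, j, hi, hj, hij⟩ :=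
    (Set.one_lt_ncard_iff (s := {i | Disjoint F (terminalTriple i)})).mp (by omega)
  have hsegs := Set.card_le_ncard_add_ncard_setOf_disjoint (pairwise_disjoint_hubSegment i j) hfin
  rw [Nat.card_eq_fintype_card, Fintype.card_fin] at hsegs
  obtain ⟨l, hl⟩ :=
    Set.nonempty_of_ncard_ne_zero (s := {l | Disjoint F (hubSegment i j l)}) (by omega)
  obtain ⟨p, hp, hodd, hedges⟩ := exists_odd_path hij l
  obtain ⟨e, heF, hep⟩ := hF p hp hodd
  have hdisj : Disjoint F (terminalTriple i ∪ hubSegment i j l ∪ terminalTriple j) :=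
    Set.disjoint_union_right.mpr ⟨Set.disjoint_union_right.mpr ⟨hi, hl⟩, hj⟩
  exact Set.disjoint_left.mp hdisj heF (hedges e hep)

end OddPathBlocker

open OddPathBlocker in
theorem odd_path_blocker_LP_integrality_gap (k : ℕ) :
    ∃ (n : ℕ) (G : SimpleGraph (Fin n)) (s t : Fin n),
      (∃ x : Sym2 (Fin n) → ℝ, (∀ e, 0 ≤ x e) ∧
        (∀ p : G.Walk s t, p.IsPath → Odd p.length →
          1 ≤ (p.edges.map x).sum) ∧
        (∑ᶠ e ∈ G.edgeSet, x e) ≤ (k : ℝ) / 2) ∧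
      (∀ F : Set (Sym2 (Fin n)), F ⊆ G.edgeSet →
        (∀ p : G.Walk s t, p.IsPath → Odd p.length → ∃ e ∈ F, e ∈ p.edges) →
        k - 1 ≤ F.ncard) := by
  refine ⟨4 * k + 2, gapGraph k, vs k, vt k,
    ⟨halfOnMatching k, halfOnMatching_nonneg, ?_, ?_⟩, ?_⟩
  · intro p _ hp
    exact p.one_le_sum_edges_of_odd_length (S := hub k) decide_lt_two_ne_of_adj
      halfOnMatching_nonneg
      (fun a b h ha hb => by simp [halfOnMatching, mem_range_matchingEdge_of_adj h ha hb])
      (by simp [hub, vs]) (by simp [hub, vt]) rfl hp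
  · simpa [halfOnMatching, div_eq_mul_inv] using
      finsum_mem_indicator_range_const_le (gapGraph k).edgeSet matchingEdge (c := 1 / 2)
        (by norm_num)
  · intro F _ hF
    exact sub_one_le_ncard_of_forall_odd_path hF
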